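/- Let I be an almost surely strictly positive real random variable, let f : (0,∞) → [0,∞) be nondecreasing, and let r > 1. Then, as an identity in [0,+∞], ∫_1^∞ P(r^{t} ≤ f(r^{t}·I)) dt = (1/log r) · ∫_0^∞ P(s ≤ f(s)·I and r·I < s) · s^{−1} ds. -/

import Mathlib

/-! The substitution `s = r ^ t * I ω`, for which `dt = ds / (s log r)`, maps `(1, ∞)` onto
`(r I ω, ∞)` and turns the event `r ^ t ≤ f (r ^ t I ω)` into `s ≤ f s * I ω`; Tonelli's theorem
exchanges the time integral with the expectation on both sides. Monotonicity of `f` is only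
needed for measurability: extended by `0` off `(0, ∞)` it becomes Borel, and this changes
neither side because `I > 0` almost surely. -/

open MeasureTheory Filter Set
open scoped ENNReal

theorem MonotoneOn.measurable_indicator {α β : Type*} [TopologicalSpace α] [MeasurableSpace α]
    [BorelSpace α] [LinearOrder α] [OrderTopology α] [SecondCountableTopology α]
    [TopologicalSpace β] [MeasurableSpace β] [BorelSpace β] [LinearOrder β] [OrderClosedTopology β]
    [Zero α] {f : β → α} {s : Set β} (hf : MonotoneOn f s) (hs : MeasurableSet s) :
    Measurable (s.indicator f) := by
  refine measurable_of_restrict_of_restrict_compl hs ?_ ?_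
  · have : Monotone (s.domRestrict (s.indicator f)) := fun x y hxy => by
      simpa [indicator_of_mem x.2, indicator_of_mem y.2] using hf x.2 y.2 hxy
    exact this.measurable
  · have : sᶜ.domRestrict (s.indicator f) = fun _ => 0 :=
      funext fun x => indicator_of_notMem x.2 f
    exact this ▸ measurable_const

theorem strictMono_rpow_mul {r c : ℝ} (hr : 1 < r) (hc : 0 < c) :
    StrictMono fun t : ℝ => r ^ t * c := fun _ _ hxy =>
  mul_lt_mul_of_pos_right ((Real.rpow_lt_rpow_left_iff hr).2 hxy) hc

theorem image_rpow_mul_Ioi {r c : ℝ} (hr : 1 < r) (hc : 0 < c) (a : ℝ) :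
    (fun t => r ^ t * c) '' Ioi a = Ioi (r ^ a * c) := by
  ext s
  constructor
  · rintro ⟨t, ht, rfl⟩
    exact strictMono_rpow_mul hr hc ht
  · intro hs
    have hsc : 0 < s / c := div_pos ((by positivity : 0 < r ^ a * c).trans hs) hc
    refine ⟨Real.logb r (s / c), ?_, ?_⟩
    · rw [mem_Ioi, Real.lt_logb_iff_rpow_lt hr hsc, lt_div_iff₀ hc]
      exact hs
    · simp only [Real.rpow_logb (zero_lt_one.trans hr) hr.ne' hsc, div_mul_cancel₀ s hc.ne']

theorem lintegral_comp_rpow_mul_Ioi {r c : ℝ} (hr : 1 < r) (hc : 0 < c) (a : ℝ) (h : ℝ → ℝ≥0∞) :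
    ∫⁻ t in Ioi a, h (r ^ t * c) =
      ENNReal.ofReal (1 / Real.log r) * ∫⁻ s in Ioi (r ^ a * c), h s * ENNReal.ofReal s⁻¹ := by
  have hr₀ : 0 < r := zero_lt_one.trans hr
  have hlog : 0 < Real.log r := Real.log_pos hr
  have hderiv : ∀ t ∈ Ioi a, HasDerivWithinAt (fun t => r ^ t * c) (r ^ t * Real.log r * c)
      (Ioi a) t := fun t _ =>
    ((Real.hasStrictDerivAt_const_rpow hr₀ t).hasDerivAt.mul_const c).hasDerivWithinAt
  have hjacobian : ∀ t : ℝ, ENNReal.ofReal |r ^ t * Real.log r * c| *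
      (h (r ^ t * c) * ENNReal.ofReal (r ^ t * c)⁻¹) =
        ENNReal.ofReal (Real.log r) * h (r ^ t * c) := by
    intro t
    have hrt : 0 < r ^ t := Real.rpow_pos_of_pos hr₀ t
    rw [abs_of_pos (by positivity), mul_left_comm, ← ENNReal.ofReal_mul (by positivity),
      mul_comm]
    congr 2
    field_simp
  rw [← image_rpow_mul_Ioi hr hc a, lintegral_image_eq_lintegral_abs_deriv_mul measurableSet_Ioi
    hderiv (strictMono_rpow_mul hr hc).injective.injOn]
  simp_rw [hjacobian]
  rw [lintegral_const_mul' _ _ ENNReal.ofReal_ne_top, ← mul_assoc,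
    ← ENNReal.ofReal_mul (by positivity), one_div_mul_cancel hlog.ne', ENNReal.ofReal_one, one_mul]

theorem lintegral_measure_setOf_mul_comm {α β : Type*} [MeasurableSpace α] [MeasurableSpace β]
    {μ : Measure α} {ν : Measure β} [SFinite μ] [SFinite ν] {p : α → β → Prop}
    (hp : MeasurableSet {z : α × β | p z.1 z.2}) {w : α → ℝ≥0∞} (hw : Measurable w) :
    ∫⁻ x, ν {y | p x y} * w x ∂μ = ∫⁻ y, ∫⁻ x, {x | p x y}.indicator w x ∂μ ∂ν := by
  calc ∫⁻ x, ν {y | p x y} * w x ∂μ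
      = ∫⁻ x, ∫⁻ y, {y | p x y}.indicator (fun _ => w x) y ∂ν ∂μ := by
        refine lintegral_congr fun x => ?_
        have hslice : MeasurableSet {y | p x y} := measurable_prodMk_left hp
        rw [lintegral_indicator_const hslice, mul_comm]
    _ = ∫⁻ y, ∫⁻ x, {y | p x y}.indicator (fun _ => w x) y ∂μ ∂ν :=
        lintegral_lintegral_swap ((hw.comp measurable_fst).indicator hp).aemeasurable
    _ = ∫⁻ y, ∫⁻ x, {x | p x y}.indicator w x ∂μ ∂ν := rfl

theorem lintegral_indicator_rpow_mul_le {r c : ℝ} (hr : 1 < r) (hc : 0 < c) (g : ℝ → ℝ) :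
    ∫⁻ t in Ioi 1, {t : ℝ | r ^ t ≤ g (r ^ t * c)}.indicator 1 t =
      ENNReal.ofReal (1 / Real.log r) *
        ∫⁻ s in Ioi 0,
          {s : ℝ | s ≤ g s * c ∧ r * c < s}.indicator (fun s => ENNReal.ofReal s⁻¹) s := by
  have key := lintegral_comp_rpow_mul_Ioi hr hc 1 ({s | s ≤ g s * c}.indicator 1)
  rw [Real.rpow_one] at key
  convert key using 2
  · ext t
    simp only [indicator_apply, mem_ofPred_eq, mul_le_mul_iff_of_pos_right hc, Pi.one_apply]
  · have hsplit : {s : ℝ | s ≤ g s * c ∧ r * c < s}.indicator (fun s => ENNReal.ofReal s⁻¹) =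
        (Ioi (r * c)).indicator fun s => {s | s ≤ g s * c}.indicator 1 s * ENNReal.ofReal s⁻¹ := by
      ext s
      by_cases h : r * c < s <;> simp [indicator_apply, h]
    rw [hsplit, lintegral_indicator measurableSet_Ioi, Measure.restrict_restrict measurableSet_Ioi,
      Ioi_inter_Ioi, sup_eq_left.2 (by positivity)]

theorem change_of_variables_at_infinity_general
    {Ω : Type*} [MeasurableSpace Ω] (ℙ : Measure Ω) [IsProbabilityMeasure ℙ]
    (I : Ω → ℝ) (hI : Measurable I) (hIpos : ∀ᵐ ω ∂ℙ, 0 < I ω)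
    (f : ℝ → ℝ) (hf_mono : MonotoneOn f (Ioi 0))
    (r : ℝ) (hr : 1 < r) :
    ∫⁻ t in Ioi (1 : ℝ), ℙ {ω | r ^ t ≤ f (r ^ t * I ω)} =
      ENNReal.ofReal (1 / Real.log r) *
        ∫⁻ s in Ioi (0 : ℝ),
          ℙ {ω | s ≤ f s * I ω ∧ r * I ω < s} * ENNReal.ofReal s⁻¹ := by
  set g := (Ioi (0 : ℝ)).indicator f
  have hg : Measurable g := hf_mono.measurable_indicator measurableSet_Ioi
  have hgf : ∀ x ∈ Ioi (0 : ℝ), g x = f x := fun x hx => indicator_of_mem hx f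
  have hL : ∀ t : ℝ, ℙ {ω | r ^ t ≤ f (r ^ t * I ω)} = ℙ {ω | r ^ t ≤ g (r ^ t * I ω)} :=
    fun t => measure_congr <| eventuallyEq_set.2 <| hIpos.mono fun ω hω => by
      rw [mem_ofPred_eq, mem_ofPred_eq, hgf _ (mem_Ioi.2 (by positivity))]
  have hR : ∀ s ∈ Ioi (0 : ℝ), ℙ {ω | s ≤ f s * I ω ∧ r * I ω < s} * ENNReal.ofReal s⁻¹ =
      ℙ {ω | s ≤ g s * I ω ∧ r * I ω < s} * ENNReal.ofReal s⁻¹ := fun s hs => by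
    rw [hgf s hs]
  calc ∫⁻ t in Ioi (1 : ℝ), ℙ {ω | r ^ t ≤ f (r ^ t * I ω)}
      = ∫⁻ ω, (∫⁻ t in Ioi 1, {t : ℝ | r ^ t ≤ g (r ^ t * I ω)}.indicator 1 t) ∂ℙ := by
        simpa only [hL, Pi.one_apply, mul_one] using
          lintegral_measure_setOf_mul_comm (by measurability) measurable_one
    _ = ∫⁻ ω, ENNReal.ofReal (1 / Real.log r) * (∫⁻ s in Ioi 0,
          {s : ℝ | s ≤ g s * I ω ∧ r * I ω < s}.indicator (fun s => ENNReal.ofReal s⁻¹) s) ∂ℙ :=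
        lintegral_congr_ae (hIpos.mono fun ω hω => lintegral_indicator_rpow_mul_le hr hω g)
    _ = _ := by
      rw [lintegral_const_mul' _ _ ENNReal.ofReal_ne_top, ← lintegral_measure_setOf_mul_comm
        (by measurability) (by fun_prop), setLIntegral_congr_fun measurableSet_Ioi hR]

/-- Change-of-variables identity at `+∞`:
`∫_1^∞ P(r^t ≤ f(r^t I)) dt = (1/log r) ∫_0^∞ P(s ≤ f(s) I, rI < s) s⁻¹ ds`. -/
theorem change_of_variables_at_infinity
    {Ω : Type*} [MeasurableSpace Ω] (ℙ : Measure Ω) [IsProbabilityMeasure ℙ]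
    (I : Ω → ℝ) (hI : Measurable I) (hIpos : ∀ᵐ ω ∂ℙ, 0 < I ω)
    (f : ℝ → ℝ) (hf_nn : ∀ s : ℝ, 0 < s → 0 ≤ f s) (hf_mono : MonotoneOn f (Ioi 0))
    (r : ℝ) (hr : 1 < r) :
    ∫⁻ t in Ioi (1 : ℝ), ℙ {ω | r ^ t ≤ f (r ^ t * I ω)} =
      ENNReal.ofReal (1 / Real.log r) *
        ∫⁻ s in Ioi (0 : ℝ),
          ℙ {ω | s ≤ f s * I ω ∧ r * I ω < s} * ENNReal.ofReal s⁻¹ :=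
  change_of_variables_at_infinity_general ℙ I hI hIpos f hf_mono r hr
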